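/- arXiv:1910.00931 — 7 statements merged into one kernel-verified Lean document; each statement's English description precedes it below -/
import Mathlib

section
/- The group 𝒫(C) associated to the Collatz function C is trivial if and only if the Collatz conjecture holds, i.e., if and only if every forward orbit of C contains 1. -/
/-- The Collatz function on the positive integers. -/
def collatz (n : ℕ+) : ℕ+ :=
  if h : Odd (n : ℕ) then 3 * n + 1
  else ⟨(n : ℕ) / 2, by
    have h2 : Even (n : ℕ) := Nat.not_odd_iff_even.mp h
    obtain ⟨r, hr⟩ := h2
    have := n.pos
    omega⟩

/-- The relators of the presentation `𝒫(f)`: for each `i ∈ ℕ+`, the word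
`a_{f(i)}⁻¹ a_i a_{f(i)} a_i⁻²` in the free group on `ℕ+`. -/
def Prels (f : ℕ+ → ℕ+) : Set (FreeGroup ℕ+) :=
  {r | ∃ i : ℕ+, r =
    (FreeGroup.of (f i))⁻¹ * FreeGroup.of i * FreeGroup.of (f i) * (FreeGroup.of i ^ 2)⁻¹}

/-!
If every orbit reaches `1`: the relations at `i = 1, 4, 2` are Higman's presentation on three
cyclically ordered generators, which defines the trivial group, so `a₁ = 1`; and `a_{C(i)} = 1`
turns the relation at `i` into `a_i = a_i²`, so the generators die backwards along every orbit.

Conversely, if the orbit of some `i` avoids `1`, then from some point on it is either injective or a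
cycle, of length at least `4` because `1 → 4 → 2 → 1` is the only Collatz cycle of length at most
`3`. Higman's group on `n ≥ 4` cyclically ordered generators is nontrivial: chains
`g₀, …, g_k` with `g_{j+1}⁻¹ g_j g_{j+1} = g_j²` are built by amalgamating copies of
`BS(1,2) = ⟨a, t | t⁻¹ a t = a²⟩` over `ℤ`, and by the normal form theorem for amalgams their
endpoints `g₀, g_k` are free for `k ≥ 2`; two such chains glued along these free groups close up
into a cycle. Sending the orbit periodically onto such a cycle, and
everything else to `1`, defines a homomorphism from `𝒫(C)` that is nontrivial.
-/

open Function Monoid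

section Higman3

variable {G : Type*} [Group G] {a b c : G}

theorem inv_mul_mul_eq_mul_inv_of_conj_eq_sq (h : b⁻¹ * a * b = a ^ 2) :
    a⁻¹ * b * a = b * a⁻¹ :=
  calc a⁻¹ * b * a = a⁻¹ * b * a ^ 2 * a⁻¹ := by simp [pow_succ, mul_assoc]
    _ = a⁻¹ * b * (b⁻¹ * a * b) * a⁻¹ := by rw [h]
    _ = b * a⁻¹ := by simp [mul_assoc]

theorem eq_one_of_conj_eq_sq_of_sq_eq_one (h : b⁻¹ * a * b = a ^ 2) (ha : a ^ 2 = 1) : a = 1 := by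
  rwa [ha, mul_assoc, inv_mul_eq_one, right_eq_mul] at h

theorem higman3_sq_mul_sq_mul_sq (h₁ : b⁻¹ * a * b = a ^ 2) (h₂ : c⁻¹ * b * c = b ^ 2)
    (h₃ : a⁻¹ * c * a = c ^ 2) : a ^ 2 * b ^ 2 * c ^ 2 = 1 := by
  have hba := inv_mul_mul_eq_mul_inv_of_conj_eq_sq h₁
  have hcb : (c ^ 2)⁻¹ * b * c ^ 2 = b ^ 4 :=
    calc (c ^ 2)⁻¹ * b * c ^ 2 = c⁻¹ * (c⁻¹ * b * c) * c := by simp [pow_succ, mul_assoc]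
      _ = c⁻¹ * b ^ 2 * c := by rw [h₂]
      _ = (c⁻¹ * b * c) * (c⁻¹ * b * c) := by simp [pow_succ, mul_assoc]
      _ = b ^ 4 := by rw [h₂]; simp [pow_succ, mul_assoc]
  have hac : (c ^ 2)⁻¹ * a⁻¹ * c ^ 2 = c ^ 2 * a⁻¹ :=
    calc (c ^ 2)⁻¹ * a⁻¹ * c ^ 2 = (c ^ 2)⁻¹ * ((a⁻¹ * c * a) * (a⁻¹ * c * a)) * a⁻¹ := by
          simp [pow_succ, mul_assoc]
      _ = c ^ 2 * a⁻¹ := by rw [h₃]; simp [pow_succ, mul_assoc]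
  -- `h₂` conjugated by `a`
  have key : b ^ 4 * (c ^ 2 * a⁻¹) = b ^ 2 * a⁻¹ ^ 3 :=
    calc b ^ 4 * (c ^ 2 * a⁻¹) = (c ^ 2)⁻¹ * (b * a⁻¹) * c ^ 2 := by
          rw [← hcb, ← hac]; simp [pow_succ, mul_assoc]
      _ = (a⁻¹ * c * a)⁻¹ * (a⁻¹ * b * a) * (a⁻¹ * c * a) := by rw [h₃, hba]
      _ = a⁻¹ * (c⁻¹ * b * c) * a := by simp [mul_assoc]
      _ = (a⁻¹ * b * a) * (a⁻¹ * b * a) := by rw [h₂]; simp [pow_succ, mul_assoc]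
      _ = (b * a⁻¹) * (b * a⁻¹) := by rw [hba]
      _ = b * (a⁻¹ * b * a) * a⁻¹ ^ 2 := by simp [pow_succ, mul_assoc]
      _ = b ^ 2 * a⁻¹ ^ 3 := by rw [hba]; simp [pow_succ, mul_assoc]
  calc a ^ 2 * b ^ 2 * c ^ 2 = a ^ 2 * b⁻¹ ^ 2 * (b ^ 4 * (c ^ 2 * a⁻¹)) * a := by
        simp [pow_succ, mul_assoc]
    _ = 1 := by rw [key]; simp [pow_succ, mul_assoc]

theorem higman3_sq_eq_cube (h₁ : b⁻¹ * a * b = a ^ 2) (h₂ : c⁻¹ * b * c = b ^ 2)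
    (h₃ : a⁻¹ * c * a = c ^ 2) : a ^ 2 = b ^ 3 := by
  have habc := higman3_sq_mul_sq_mul_sq h₁ h₂ h₃
  have hcb := inv_mul_mul_eq_mul_inv_of_conj_eq_sq h₂
  -- `habc` conjugated by `b`
  have key : a ^ 2 * a ^ 2 * b ^ 2 * (c * b⁻¹) * (c * b⁻¹) = 1 :=
    calc a ^ 2 * a ^ 2 * b ^ 2 * (c * b⁻¹) * (c * b⁻¹)
        = (b⁻¹ * a * b) * (b⁻¹ * a * b) * b ^ 2 * (b⁻¹ * c * b) * (b⁻¹ * c * b) := by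
          rw [h₁, hcb]
      _ = b⁻¹ * (a ^ 2 * b ^ 2 * c ^ 2) * b := by simp [pow_succ, mul_assoc]
      _ = 1 := by rw [habc]; simp
  have : a ^ 2 * (b ^ 3)⁻¹ = 1 :=
    calc a ^ 2 * (b ^ 3)⁻¹ = a ^ 2 * (c⁻¹ * b * c)⁻¹ * b⁻¹ := by
          rw [h₂]; simp [pow_succ, mul_assoc]
      _ = a ^ 2 * (a ^ 2 * b ^ 2 * c ^ 2) * (c ^ 2)⁻¹ * (c * b⁻¹) * (c * b⁻¹) := by
          rw [habc]; simp [pow_succ, mul_assoc]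
      _ = 1 := by rw [← key]; simp [pow_succ, mul_assoc]
  exact mul_inv_eq_one.mp this

theorem higman3_sq_eq_one (h₁ : b⁻¹ * a * b = a ^ 2) (h₂ : c⁻¹ * b * c = b ^ 2)
    (h₃ : a⁻¹ * c * a = c ^ 2) : a ^ 2 = 1 := by
  have h := higman3_sq_eq_cube h₁ h₂ h₃
  have : a ^ 2 * a ^ 2 = a ^ 2 :=
    calc a ^ 2 * a ^ 2 = (b⁻¹ * a * b) * (b⁻¹ * a * b) := by rw [h₁]
      _ = b⁻¹ * a ^ 2 * b := by simp [pow_succ, mul_assoc]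
      _ = a ^ 2 := by rw [h]; simp [pow_succ, mul_assoc]
  simpa using this

theorem higman3_eq_one (h₁ : b⁻¹ * a * b = a ^ 2) (h₂ : c⁻¹ * b * c = b ^ 2)
    (h₃ : a⁻¹ * c * a = c ^ 2) : a = 1 ∧ b = 1 ∧ c = 1 :=
  ⟨eq_one_of_conj_eq_sq_of_sq_eq_one h₁ (higman3_sq_eq_one h₁ h₂ h₃),
    eq_one_of_conj_eq_sq_of_sq_eq_one h₂ (higman3_sq_eq_one h₂ h₃ h₁),
    eq_one_of_conj_eq_sq_of_sq_eq_one h₃ (higman3_sq_eq_one h₃ h₁ h₂)⟩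

end Higman3

namespace Monoid.PushoutI

variable {ι H : Type*} {G K : ι → Type*} [∀ i, Group (G i)] [∀ i, Group (K i)] [Group H]
  {φ : ∀ i, H →* G i}

theorem injective_coprodI_lift (hφ : ∀ i, Injective (φ i)) (ψ : ∀ i, K i →* G i)
    (hψ : ∀ i (k : K i), k ≠ 1 → ψ i k ∉ (φ i).range) :
    Injective (CoprodI.lift fun i => (of (φ := φ) i).comp (ψ i)) := by
  classical
  rw [injective_iff_map_eq_one]
  intro x hx
  set w := CoprodI.Word.equiv x
  let w' : CoprodI.Word G :=
    { toList := w.toList.map fun l => ⟨l.1, ψ l.1 l.2⟩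
      ne_one := by
        simp only [List.mem_map]
        rintro _ ⟨l, hl, rfl⟩ h1
        exact hψ l.1 l.2 (w.ne_one l hl) (by rw [show ψ l.1 l.2 = 1 from h1]; exact one_mem _)
      chain_ne := List.isChain_map _ |>.mpr w.chain_ne }
  have hred : Reduced φ w' := by
    simp only [Reduced, w', List.mem_map]
    rintro _ ⟨l, hl, rfl⟩
    exact hψ l.1 l.2 (w.ne_one l hl)
  have hprod : ofCoprodI w'.prod = CoprodI.lift (fun i => (of (φ := φ) i).comp (ψ i)) w.prod := by
    simp only [CoprodI.Word.prod, w', List.map_map, map_list_prod]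
    rfl
  have hw : w.prod = x := CoprodI.Word.equiv.symm_apply_apply x
  have hempty : w' = .empty :=
    hred.eq_empty_of_mem_range hφ (by rw [hprod, hw, hx]; exact one_mem _)
  have : w.toList = [] := List.map_eq_nil_iff.mp (congrArg CoprodI.Word.toList hempty)
  rw [← hw, CoprodI.Word.prod, this]
  rfl

theorem injective_freeGroup_lift (hφ : ∀ i, Injective (φ i)) (x : ∀ i, G i)
    (hx : ∀ i (k : ℤ), x i ^ k ∈ (φ i).range → k = 0) :
    Injective (FreeGroup.lift fun i => of (φ := φ) i (x i)) := by
  have : FreeGroup.lift (fun i => of (φ := φ) i (x i)) =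
      (CoprodI.lift fun i => (of (φ := φ) i).comp (FreeGroup.lift fun _ => x i)).comp
        freeGroupEquivCoprodI.toMonoidHom := by
    ext i
    simp
  rw [this, MonoidHom.coe_comp]
  refine (injective_coprodI_lift hφ _ fun i u hu hmem => hu ?_).comp
    freeGroupEquivCoprodI.injective
  obtain ⟨k, rfl⟩ : ∃ k : ℤ, FreeGroup.of () ^ k = u :=
    ⟨FreeGroup.equivIntOfUnique u, FreeGroup.equivIntOfUnique.left_inv u⟩
  simp [hx i k (by simpa using hmem)]

end Monoid.PushoutI

section FreePairs

variable {G : Type*} [Group G] {x y : G}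

def ZPowIndependent (x y : G) : Prop :=
  ∀ m n : ℤ, x ^ m = y ^ n → m = 0 ∧ n = 0

def IsFreePair (x y : G) : Prop :=
  Injective (FreeGroup.lift fun b : Bool => bif b then y else x)

theorem ZPowIndependent.symm (h : ZPowIndependent x y) : ZPowIndependent y x :=
  fun m n hmn => (h n m hmn.symm).symm

theorem ZPowIndependent.ne_one (h : ZPowIndependent x y) : x ≠ 1 := by
  intro hx
  simpa using h 1 0 (by simp [hx])

theorem ZPowIndependent.injective_zpowersHom (h : ZPowIndependent x y) :
    Injective (zpowersHom G y) := by
  rw [injective_iff_map_eq_one]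
  intro n hn
  simpa using (h 0 n.toAdd (by simpa using hn.symm)).2

theorem ZPowIndependent.eq_zero_of_zpow_mem_range (h : ZPowIndependent x y) {k : ℤ}
    (hk : x ^ k ∈ (zpowersHom G y).range) : k = 0 := by
  obtain ⟨n, hn⟩ := hk
  exact (h k n.toAdd (by simpa using hn.symm)).1

theorem FreeGroup.zpowIndependent_of_of {α : Type*} {a b : α} (hab : a ≠ b) :
    ZPowIndependent (FreeGroup.of a) (FreeGroup.of b) := by
  classical
  intro m n h
  have key := congrArg (FreeGroup.lift fun c => Multiplicative.ofAdd (Pi.single c (1 : ℤ))) h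
  simp only [map_zpow, FreeGroup.lift_apply_of] at key
  have := congrFun (congrArg Multiplicative.toAdd key)
  constructor
  · simpa [hab] using this a
  · simpa [hab.symm] using (this b).symm

theorem IsFreePair.zpowIndependent (h : IsFreePair x y) : ZPowIndependent x y := by
  intro m n hmn
  refine FreeGroup.zpowIndependent_of_of Bool.false_ne_true m n (h ?_)
  simpa using hmn

theorem IsFreePair.symm (h : IsFreePair x y) : IsFreePair y x := by
  have : (FreeGroup.lift fun b : Bool => bif b then x else y) =
      (FreeGroup.lift fun b : Bool => bif b then y else x).comp
        (FreeGroup.freeGroupCongr Equiv.boolNot).toMonoidHom := by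
    ext b
    cases b <;> rfl
  rw [IsFreePair, this, MonoidHom.coe_comp]
  exact h.comp (MulEquiv.injective _)

end FreePairs

section Amalgam

universe u

variable {A B : Type u} {H : Type*} [Group A] [Group B] [Group H]

def AmalgamFactor (A B : Type u) : Bool → Type u
  | false => A
  | true => B

instance AmalgamFactor.instGroup : ∀ b, Group (AmalgamFactor A B b)
  | false => ‹Group A›
  | true => ‹Group B›

def amalgamDiagram (f : H →* A) (g : H →* B) : ∀ b, H →* AmalgamFactor A B b
  | false => f
  | true => g

abbrev Amalgam (f : H →* A) (g : H →* B) :=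
  PushoutI (amalgamDiagram f g)

namespace Amalgam

variable {f : H →* A} {g : H →* B}

def inl : A →* Amalgam f g := PushoutI.of (φ := amalgamDiagram f g) false

def inr : B →* Amalgam f g := PushoutI.of (φ := amalgamDiagram f g) true

theorem inl_apply_eq_inr_apply (h : H) : (inl (f h) : Amalgam f g) = inr (g h) :=
  (PushoutI.of_apply_eq_base _ false h).trans (PushoutI.of_apply_eq_base _ true h).symm

theorem injective_amalgamDiagram (hf : Injective f) (hg : Injective g) :
    ∀ b, Injective (amalgamDiagram f g b)
  | false => hf
  | true => hg

theorem inl_injective (hf : Injective f) (hg : Injective g) :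
    Injective (inl : A →* Amalgam f g) :=
  PushoutI.of_injective (injective_amalgamDiagram hf hg) false

theorem isFreePair_inl_inr (hf : Injective f) (hg : Injective g) {x : A} {y : B}
    (hx : ∀ k : ℤ, x ^ k ∈ f.range → k = 0) (hy : ∀ k : ℤ, y ^ k ∈ g.range → k = 0) :
    IsFreePair (inl x : Amalgam f g) (inr y) := by
  let z : ∀ b, AmalgamFactor A B b
    | false => x
    | true => y
  have : (fun b : Bool => bif b then (inr y : Amalgam f g) else inl x) =
      fun b => PushoutI.of (φ := amalgamDiagram f g) b (z b) := by
    ext b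
    cases b <;> rfl
  rw [IsFreePair, this]
  exact PushoutI.injective_freeGroup_lift (injective_amalgamDiagram hf hg) z fun
    | false => hx
    | true => hy

theorem isFreePair_of_zpowIndependent {x y : A} {u v : B} (hxy : ZPowIndependent x y)
    (hvu : ZPowIndependent v u) :
    IsFreePair (inl x : Amalgam (zpowersHom A y) (zpowersHom B u)) (inr v) :=
  isFreePair_inl_inr hxy.injective_zpowersHom hvu.injective_zpowersHom
    (fun _ => hxy.eq_zero_of_zpow_mem_range) (fun _ => hvu.eq_zero_of_zpow_mem_range)

end Amalgam

end Amalgam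

def shiftPerm : Equiv.Perm ℚ := Equiv.addRight 1
def halvePerm : Equiv.Perm ℚ := Equiv.mulRight₀ 2⁻¹ (by norm_num)

theorem shiftPerm_zpow_apply (m : ℤ) (q : ℚ) : (shiftPerm ^ m) q = q + m := by
  induction m using Int.induction_on generalizing q with
  | zero => simp
  | succ n ih =>
    rw [zpow_add_one, Equiv.Perm.mul_apply, ih]
    simp [shiftPerm]
    ring
  | pred n ih =>
    rw [zpow_sub_one, Equiv.Perm.mul_apply, ih]
    simp [shiftPerm, Equiv.Perm.inv_def]
    ring

theorem halvePerm_zpow_apply (n : ℤ) (q : ℚ) : (halvePerm ^ n) q = q / 2 ^ n := by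
  induction n using Int.induction_on generalizing q with
  | zero => simp
  | succ n ih =>
    rw [zpow_add_one, Equiv.Perm.mul_apply, ih, zpow_add_one₀ two_ne_zero]
    simp [halvePerm]
    ring
  | pred n ih =>
    rw [zpow_sub_one, Equiv.Perm.mul_apply, ih, zpow_sub_one₀ two_ne_zero]
    simp [halvePerm, Equiv.Perm.inv_def, div_eq_mul_inv, mul_assoc, mul_comm]

theorem halvePerm_inv_mul_shiftPerm_mul_halvePerm :
    halvePerm⁻¹ * shiftPerm * halvePerm = shiftPerm ^ 2 := by
  ext q
  simp [shiftPerm, halvePerm, Equiv.Perm.inv_def, sq]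
  ring

theorem zpowIndependent_shiftPerm_halvePerm : ZPowIndependent shiftPerm halvePerm := by
  intro m n h
  have h0 := congrArg (· 0) h
  have h1 := congrArg (· 1) h
  simp only [shiftPerm_zpow_apply, halvePerm_zpow_apply, zero_add, zero_div,
    Int.cast_eq_zero] at h0 h1
  subst h0
  exact ⟨rfl, (zpow_eq_one_iff_right₀ zero_le_two (by norm_num : (2 : ℚ) ≠ 1)).mp
    (by simpa using h1)⟩

section HigmanChains

variable {G : Type*} [Group G]

def IsHigmanChain (g : ℕ → G) (n : ℕ) : Prop :=
  ∀ i < n, (g (i + 1))⁻¹ * g i * g (i + 1) = g i ^ 2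

theorem IsHigmanChain.map {H : Type*} [Group H] {g : ℕ → G} {n : ℕ} (hg : IsHigmanChain g n)
    (φ : G →* H) : IsHigmanChain (φ ∘ g) n := fun i hi => by
  simpa using congrArg φ (hg i hi)

theorem IsHigmanChain.exists_succ_isFreePair {A : Type} [Group A] {g : ℕ → A} {n : ℕ}
    (hg : IsHigmanChain g n) (hind : ZPowIndependent (g 0) (g n)) :
    ∃ (G : Type) (_ : Group G) (g' : ℕ → G),
      IsHigmanChain g' (n + 1) ∧ IsFreePair (g' 0) (g' (n + 1)) := by
  -- amalgamate with `Equiv.Perm ℚ` along `g n = shiftPerm`; `halvePerm` becomes `g (n + 1)`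
  let f := zpowersHom A (g n)
  let f' := zpowersHom (Equiv.Perm ℚ) shiftPerm
  have hbridge : (Amalgam.inl (g n) : Amalgam f f') = Amalgam.inr shiftPerm := by
    simpa [f, f'] using Amalgam.inl_apply_eq_inr_apply (f := f) (g := f') (.ofAdd 1)
  refine ⟨Amalgam f f', inferInstance,
    fun i => if i = n + 1 then Amalgam.inr halvePerm else Amalgam.inl (g i), ?_, ?_⟩
  · intro i hi
    obtain hi | rfl := Nat.lt_succ_iff_lt_or_eq.mp hi
    · simpa [show i ≠ n + 1 by omega, show i ≠ n by omega] using
        hg.map (Amalgam.inl (f := f) (g := f')) i hi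
    · simpa [hbridge] using congrArg Amalgam.inr halvePerm_inv_mul_shiftPerm_mul_halvePerm
  · simpa using Amalgam.isFreePair_of_zpowIndependent hind zpowIndependent_shiftPerm_halvePerm.symm

theorem exists_higmanChain_zpowIndependent (n : ℕ) :
    ∃ (G : Type) (_ : Group G) (g : ℕ → G),
      IsHigmanChain g (n + 1) ∧ ZPowIndependent (g 0) (g (n + 1)) := by
  induction n with
  | zero =>
    refine ⟨Equiv.Perm ℚ, inferInstance, fun i => if i = 0 then shiftPerm else halvePerm, ?_, ?_⟩
    · intro i hi
      obtain rfl : i = 0 := by omega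
      simpa using halvePerm_inv_mul_shiftPerm_mul_halvePerm
    · simpa using zpowIndependent_shiftPerm_halvePerm
  | succ n ih =>
    obtain ⟨G, _, g, hg, hind⟩ := ih
    obtain ⟨G', _, g', hg', hfree⟩ := hg.exists_succ_isFreePair hind
    exact ⟨G', inferInstance, g', hg', hfree.zpowIndependent⟩

theorem exists_higmanChain_isFreePair (n : ℕ) :
    ∃ (G : Type) (_ : Group G) (g : ℕ → G),
      IsHigmanChain g (n + 2) ∧ IsFreePair (g 0) (g (n + 2)) :=
  have ⟨_, _, _, hg, hind⟩ := exists_higmanChain_zpowIndependent n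
  hg.exists_succ_isFreePair hind

def concatArcs {α : Type*} (g h : ℕ → α) (p r : ℕ) : α :=
  if r < p then g r else h (r - p)

theorem IsHigmanChain.concat {g h : ℕ → G} {p q : ℕ} (hg : IsHigmanChain g p)
    (hh : IsHigmanChain h q) (hgh : g p = h 0) : IsHigmanChain (concatArcs g h p) (p + q) := by
  intro r hr
  by_cases hrp : r < p
  · have hsucc : concatArcs g h p (r + 1) = g (r + 1) := by
      unfold concatArcs
      split_ifs with h'
      · rfl
      · rw [show r + 1 = p by omega, hgh, Nat.sub_self]
    rw [hsucc, concatArcs, if_pos hrp]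
    exact hg r hrp
  · simp only [concatArcs, if_neg hrp, if_neg (show ¬r + 1 < p by omega),
      show r + 1 - p = r - p + 1 by omega]
    exact hh (r - p) (by omega)

theorem IsHigmanChain.conj_eq_sq_mod {s : ℕ → G} {n : ℕ} (hs : IsHigmanChain s n) (hn : 0 < n)
    (hsn : s n = s 0) (i : ℕ) :
    (s ((i + 1) % n))⁻¹ * s (i % n) * s ((i + 1) % n) = s (i % n) ^ 2 := by
  have hnext : s ((i + 1) % n) = s (i % n + 1) := by
    rw [← Nat.mod_add_mod]
    obtain h | h : i % n + 1 < n ∨ i % n + 1 = n := Nat.lt_or_eq_of_le (Nat.mod_lt i hn)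
    · rw [Nat.mod_eq_of_lt h]
    · rw [h, Nat.mod_self, hsn]
  rw [hnext]
  exact hs _ (Nat.mod_lt i hn)

theorem exists_higmanCycle {n : ℕ} (hn : 4 ≤ n) :
    ∃ (G : Type) (_ : Group G) (t : ℕ → G),
      (∀ i, (t (i + 1))⁻¹ * t i * t (i + 1) = t i ^ 2) ∧ Periodic t n ∧ t 0 ≠ 1 := by
  obtain ⟨A, _, g, hg, hgfree⟩ := exists_higmanChain_isFreePair 0
  obtain ⟨B, _, h, hh, hhfree⟩ := exists_higmanChain_isFreePair (n - 4)
  -- glue `g 0, g 1, g 2` to `h 0, …, h (n - 2)` along `g 2 = h 0` and `g 0 = h (n - 2)`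
  let f := FreeGroup.lift fun b : Bool => bif b then g 2 else g 0
  let f' := FreeGroup.lift fun b : Bool => bif b then h 0 else h (n - 4 + 2)
  have hglue (b : Bool) : (Amalgam.inl (f (.of b)) : Amalgam f f') = Amalgam.inr (f' (.of b)) :=
    Amalgam.inl_apply_eq_inr_apply _
  let s := concatArcs (Amalgam.inl ∘ g : ℕ → Amalgam f f') (Amalgam.inr ∘ h) 2
  have hs : IsHigmanChain s n := by
    have := (hg.map Amalgam.inl).concat (hh.map Amalgam.inr) (by simpa [f, f'] using hglue true)
    rwa [show 0 + 2 + (n - 4 + 2) = n by omega] at this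
  have hsn : s n = s 0 := by
    simpa [s, concatArcs, show ¬n < 2 by omega, show n - 2 = n - 4 + 2 by omega, f, f'] using
      (hglue false).symm
  refine ⟨Amalgam f f', inferInstance, fun i => s (i % n), hs.conj_eq_sq_mod (by omega) hsn,
    (Nat.periodic_mod n).comp s, ?_⟩
  simpa [s, concatArcs, Nat.zero_mod] using
    (Amalgam.inl_injective hgfree hhfree.symm).ne hgfree.zpowIndependent.ne_one

theorem exists_periodic_higmanSeq {n : ℕ} (hn : n = 0 ∨ 4 ≤ n) :
    ∃ (G : Type) (_ : Group G) (t : ℕ → G),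
      (∀ i, (t (i + 1))⁻¹ * t i * t (i + 1) = t i ^ 2) ∧ Periodic t n ∧ t 0 ≠ 1 := by
  obtain rfl | hn := hn
  -- every `t` is `0`-periodic; `n = 0` is the `minimalPeriod` of a point with injective orbit
  · obtain ⟨G, _, t, ht, -, ht0⟩ := exists_higmanCycle le_rfl
    exact ⟨G, inferInstance, t, ht, by simp [Periodic], ht0⟩
  · exact exists_higmanCycle hn

end HigmanChains

theorem Function.modEq_minimalPeriod_of_iterate_eq {α : Type*} {f : α → α} {x : α}
    (hx : x ∈ periodicPts f) {i j : ℕ} (h : f^[i] x = f^[j] x) : i ≡ j [MOD minimalPeriod f x] := by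
  rw [← iterate_mod_minimalPeriod_eq (n := i), ← iterate_mod_minimalPeriod_eq (n := j)] at h
  have hpos := minimalPeriod_pos_of_mem_periodicPts hx
  exact (iterate_eq_iterate_iff_of_lt_minimalPeriod (Nat.mod_lt _ hpos) (Nat.mod_lt _ hpos)).mp h

theorem Function.exists_iterate_modEq_minimalPeriod {α : Type*} (f : α → α) (x : α) :
    ∃ k, ∀ i j, f^[i] (f^[k] x) = f^[j] (f^[k] x) → i ≡ j [MOD minimalPeriod f (f^[k] x)] := by
  by_cases h : ∃ a b, a < b ∧ f^[a] x = f^[b] x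
  · obtain ⟨a, b, hab, heq⟩ := h
    refine ⟨a, fun i j => modEq_minimalPeriod_of_iterate_eq ⟨b - a, Nat.sub_pos_of_lt hab, ?_⟩⟩
    rw [IsPeriodicPt, IsFixedPt, ← iterate_add_apply, Nat.sub_add_cancel hab.le, heq]
  · push Not at h
    refine ⟨0, fun i j hij => ?_⟩
    obtain hlt | rfl | hgt := lt_trichotomy i j
    · exact absurd hij (h i j hlt)
    · rfl
    · exact absurd hij.symm (h j i hgt)

theorem exists_conj_eq_sq_of_iterate_modEq {α G : Type*} [Group G] {f : α → α} {x : α} {n : ℕ}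
    (hx : ∀ i j, f^[i] x = f^[j] x → i ≡ j [MOD n]) {t : ℕ → G}
    (ht : ∀ i, (t (i + 1))⁻¹ * t i * t (i + 1) = t i ^ 2) (hper : Periodic t n) :
    ∃ γ : α → G, (∀ y, (γ (f y))⁻¹ * γ y * γ (f y) = γ y ^ 2) ∧ γ x = t 0 := by
  classical
  have ht_eq {i j : ℕ} (h : f^[i] x = f^[j] x) : t i = t j := by
    rw [← hper.map_mod_nat i, ← hper.map_mod_nat j, hx i j h]
  refine ⟨fun y => if h : ∃ i, f^[i] x = y then t h.choose else 1, fun y => ?_, ?_⟩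
  · by_cases h : ∃ i, f^[i] x = y
    · have h' : ∃ i, f^[i] x = f y := ⟨h.choose + 1, by rw [iterate_succ_apply', h.choose_spec]⟩
      simp only [dif_pos h, dif_pos h']
      rw [ht_eq (h'.choose_spec.trans (by rw [iterate_succ_apply', h.choose_spec]) :
        f^[h'.choose] x = f^[h.choose + 1] x)]
      exact ht _
    · simp only [dif_neg h, mul_one, inv_mul_cancel, one_pow]
  · have h : ∃ i, f^[i] x = x := ⟨0, rfl⟩
    simp only [dif_pos h]
    exact ht_eq h.choose_spec

section Presentation

variable {f : ℕ+ → ℕ+}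

theorem PresentedGroup.eq_one_of_forall_of_eq_one {α : Type*} {rels : Set (FreeGroup α)}
    (h : ∀ a, (PresentedGroup.of a : PresentedGroup rels) = 1) (x : PresentedGroup rels) :
    x = 1 :=
  Subgroup.mem_bot.mp (PresentedGroup.generated_by rels ⊥ (fun a => Subgroup.mem_bot.mpr (h a)) x)

theorem Prels.conj_of_eq_sq (i : ℕ+) :
    (PresentedGroup.of (f i) : PresentedGroup (Prels f))⁻¹ * .of i * .of (f i) = .of i ^ 2 := by
  have := PresentedGroup.one_of_mem (rels := Prels f) ⟨i, rfl⟩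
  rwa [map_mul, map_mul, map_mul, map_inv, map_inv, map_pow, mul_inv_eq_one] at this

theorem Prels.of_eq_one_of_iterate_eq_one
    (h1 : (PresentedGroup.of 1 : PresentedGroup (Prels f)) = 1) {n : ℕ} {i : ℕ+}
    (h : f^[n] i = 1) : (PresentedGroup.of i : PresentedGroup (Prels f)) = 1 := by
  induction n generalizing i with
  | zero => rwa [show i = 1 from h]
  | succ n ih =>
    have hrel := Prels.conj_of_eq_sq (f := f) i
    rwa [ih h, inv_one, one_mul, mul_one, sq, left_eq_mul] at hrel

theorem Prels.eq_one_of_forall_eq_one (htriv : ∀ x : PresentedGroup (Prels f), x = 1)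
    {G : Type*} [Group G] {γ : ℕ+ → G} (hγ : ∀ i, (γ (f i))⁻¹ * γ i * γ (f i) = γ i ^ 2)
    (i : ℕ+) : γ i = 1 := by
  have hrels : ∀ r ∈ Prels f, FreeGroup.lift γ r = 1 := by
    rintro _ ⟨j, rfl⟩
    simpa [mul_inv_eq_one] using hγ j
  simpa using congrArg (PresentedGroup.toGroup hrels) (htriv (.of i))

end Presentation

section Collatz

theorem collatz_one : collatz 1 = 4 := by decide

theorem collatz_four : collatz 4 = 2 := by decide

theorem collatz_two : collatz 2 = 1 := by decide

theorem coe_collatz (n : ℕ+) :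
    ((collatz n : ℕ) = 3 * n + 1 ∧ (n : ℕ) % 2 = 1) ∨
      ((collatz n : ℕ) = n / 2 ∧ (n : ℕ) % 2 = 0) := by
  by_cases h : Odd (n : ℕ)
  · refine Or.inl ⟨?_, Nat.odd_iff.mp h⟩
    rw [show collatz n = 3 * n + 1 from dif_pos h, PNat.add_coe, PNat.mul_coe]
    rfl
  · exact Or.inr ⟨congrArg PNat.val (dif_neg h : collatz n = _),
      Nat.even_iff.mp (Nat.not_odd_iff_even.mp h)⟩

theorem coe_eq_of_isPeriodicPt_collatz {n : ℕ} (hn : 0 < n) (hn3 : n ≤ 3) {c : ℕ+}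
    (hc : IsPeriodicPt collatz n c) : (c : ℕ) = 1 ∨ (c : ℕ) = 2 ∨ (c : ℕ) = 4 := by
  have h := congrArg PNat.val hc
  have h₀ := coe_collatz c
  have h₁ := coe_collatz (collatz c)
  have h₂ := coe_collatz (collatz (collatz c))
  have := c.pos
  interval_cases n <;> simp only [iterate_succ_apply', iterate_zero, id] at h <;> omega

theorem minimalPeriod_collatz_eq_zero_or_four_le {c : ℕ+} (hc : ∀ m, collatz^[m] c ≠ 1) :
    minimalPeriod collatz c = 0 ∨ 4 ≤ minimalPeriod collatz c := by
  by_contra! h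
  obtain h | h | h :=
    coe_eq_of_isPeriodicPt_collatz (by omega) (by omega) (isPeriodicPt_minimalPeriod collatz c)
  · exact hc 0 (PNat.eq h)
  · obtain rfl : c = 2 := PNat.eq h
    exact hc 1 collatz_two
  · obtain rfl : c = 4 := PNat.eq h
    exact hc 2 (by rw [iterate_succ_apply', iterate_one, collatz_four, collatz_two])

theorem of_one_eq_one_collatz : (PresentedGroup.of 1 : PresentedGroup (Prels collatz)) = 1 := by
  have h₁ := Prels.conj_of_eq_sq (f := collatz) 1
  have h₂ := Prels.conj_of_eq_sq (f := collatz) 4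
  have h₃ := Prels.conj_of_eq_sq (f := collatz) 2
  rw [collatz_one] at h₁
  rw [collatz_four] at h₂
  rw [collatz_two] at h₃
  exact (higman3_eq_one h₁ h₂ h₃).1

end Collatz

theorem stmt_2 :
    (∀ g : PresentedGroup (Prels collatz), g = 1) ↔
      ∀ i : ℕ+, ∃ n : ℕ, collatz^[n] i = 1 := by
  refine ⟨fun htriv i => ?_, fun h => PresentedGroup.eq_one_of_forall_of_eq_one fun i =>
    Prels.of_eq_one_of_iterate_eq_one of_one_eq_one_collatz (h i).choose_spec⟩
  by_contra! hi
  obtain ⟨k, hk⟩ := exists_iterate_modEq_minimalPeriod collatz i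
  have hc : ∀ m, collatz^[m] (collatz^[k] i) ≠ 1 := fun m => by
    rw [← iterate_add_apply]
    exact hi _
  obtain ⟨G, _, t, ht, hper, ht0⟩ :=
    exists_periodic_higmanSeq (minimalPeriod_collatz_eq_zero_or_four_le hc)
  obtain ⟨γ, hγ, hγc⟩ := exists_conj_eq_sq_of_iterate_modEq hk ht hper
  exact ht0 (hγc ▸ Prels.eq_one_of_forall_eq_one htriv hγ _)
end

section
/- For every n ≥ 1 and every i with 1 ≤ i ≤ n+1, the image of the generator a_i in the group B(n) has infinite order. -/
/-- The relators of the presentation `ℬ(n)` with generators `a₁, …, a_{n+1}`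
(indexed by `Fin (n+1)`): for `1 ≤ i ≤ n`, the word `a_{i+1}⁻¹ a_i a_{i+1} a_i⁻²`. -/
def Brels (n : ℕ) : Set (FreeGroup (Fin (n + 1))) :=
  {r | ∃ i : Fin n, r =
    (FreeGroup.of i.succ)⁻¹ * FreeGroup.of i.castSucc * FreeGroup.of i.succ *
      (FreeGroup.of i.castSucc ^ 2)⁻¹}

/-- The relations hold in the presented group. -/
lemma brels_holds {n : ℕ} (i : Fin n) :
    (PresentedGroup.of (rels := Brels n) i.succ)⁻¹ * PresentedGroup.of i.castSucc *
      PresentedGroup.of i.succ = (PresentedGroup.of (rels := Brels n) i.castSucc) ^ 2 := by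
  have h : PresentedGroup.mk (Brels n)
      ((FreeGroup.of i.succ)⁻¹ * FreeGroup.of i.castSucc * FreeGroup.of i.succ *
        (FreeGroup.of i.castSucc ^ 2)⁻¹) = 1 := by
    apply (QuotientGroup.eq_one_iff _).2
    exact Subgroup.subset_normalClosure ⟨i, rfl⟩
  simp only [map_mul, map_inv, map_pow] at h
  rwa [mul_inv_eq_one] at h

lemma not_isOfFinOrder_ofAdd_one : ¬ IsOfFinOrder (Multiplicative.ofAdd (1 : ℤ)) := by
  intro h
  obtain ⟨k, hk, he⟩ := (isOfFinOrder_iff_pow_eq_one).1 h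
  have : (k : ℤ) = 0 := by
    have := congrArg Multiplicative.toAdd he
    simpa using this
  omega

private lemma pow_two_zpow {G : Type*} [Group G] (a : G) (k : ℤ) :
    (a ^ k) ^ 2 = (a ^ 2) ^ k := by
  group

/-- The squaring isomorphism from `zpowers a` to `zpowers (a ^ 2)` for `a` of infinite order. -/
noncomputable def sqEquiv {G : Type*} [Group G] (a : G) (ha : ¬ IsOfFinOrder a) :
    Subgroup.zpowers a ≃* Subgroup.zpowers (a ^ 2) := by
  have hinj : Function.Injective fun n : ℤ => a ^ n :=
    injective_zpow_iff_not_isOfFinOrder.2 ha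
  refine MulEquiv.ofBijective
    ({ toFun := fun x => ⟨(x : G) ^ 2, ?_⟩,
       map_one' := ?_, map_mul' := ?_ } : Subgroup.zpowers a →* Subgroup.zpowers (a ^ 2))
    ⟨?_, ?_⟩
  · obtain ⟨k, hk⟩ := Subgroup.mem_zpowers_iff.1 x.2
    exact Subgroup.mem_zpowers_iff.2 ⟨k, by rw [← hk, pow_two_zpow]⟩
  · simp
  · intro x y
    obtain ⟨k, hk⟩ := Subgroup.mem_zpowers_iff.1 x.2
    obtain ⟨l, hl⟩ := Subgroup.mem_zpowers_iff.1 y.2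
    ext
    push_cast
    rw [← hk, ← hl, ← zpow_add, pow_two_zpow, pow_two_zpow, pow_two_zpow, ← zpow_add]
  · intro x y hxy
    obtain ⟨k, hk⟩ := Subgroup.mem_zpowers_iff.1 x.2
    obtain ⟨l, hl⟩ := Subgroup.mem_zpowers_iff.1 y.2
    have h2 : ((x : G)) ^ 2 = ((y : G)) ^ 2 := congrArg Subtype.val hxy
    rw [← hk, ← hl] at h2
    have h3 : a ^ (k * 2) = a ^ (l * 2) := by
      rw [zpow_mul, zpow_mul]
      exact_mod_cast h2
    have h4 : k * 2 = l * 2 := hinj h3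
    have h5 : k = l := by omega
    apply Subtype.ext
    rw [← hk, ← hl, h5]
  · rintro ⟨b, hb⟩
    obtain ⟨k, hk⟩ := Subgroup.mem_zpowers_iff.1 hb
    exact ⟨⟨a ^ k, Subgroup.zpow_mem_zpowers a k⟩, Subtype.ext (by
      show (a ^ k) ^ 2 = b
      rw [← hk, pow_two_zpow])⟩

lemma main_lemma : ∀ (n : ℕ) (i : Fin (n + 1)),
    ¬ IsOfFinOrder (PresentedGroup.of (rels := Brels n) i) := by
  intro n
  induction n with
  | zero =>
    intro i hfin
    have hrel : ∀ r ∈ Brels 0,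
        FreeGroup.lift (fun _ : Fin 1 => (Multiplicative.ofAdd (1 : ℤ))) r = 1 := by
      rintro r ⟨j, -⟩; exact j.elim0
    have := (PresentedGroup.toGroup hrel).isOfFinOrder hfin
    rw [PresentedGroup.toGroup.of] at this
    exact not_isOfFinOrder_ofAdd_one this
  | succ n ih =>
    intro i
    by_cases h : (i : ℕ) < n + 1
    · -- lower generator: embed via the HNN extension of B(n)
      set G := PresentedGroup (Brels n)
      set a : G := PresentedGroup.of (Fin.last n) with ha_def
      have ha : ¬ IsOfFinOrder a := ih (Fin.last n)
      set φ := sqEquiv a ha with hφ_def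
      set H := HNNExtension G (Subgroup.zpowers a) (Subgroup.zpowers (a ^ 2)) φ
      set f : Fin (n + 2) → H := fun j =>
        if hj : (j : ℕ) < n + 1 then
          HNNExtension.of (PresentedGroup.of (rels := Brels n) ⟨j, hj⟩)
        else HNNExtension.t⁻¹ with hf_def
      have fpos : ∀ (j : Fin (n + 2)) (hj : (j : ℕ) < n + 1),
          f j = HNNExtension.of (PresentedGroup.of (rels := Brels n) ⟨j, hj⟩) := by
        intro j hj
        simp only [hf_def]
        rw [dif_pos hj]
      have fneg : ∀ (j : Fin (n + 2)), ¬ (j : ℕ) < n + 1 → f j = HNNExtension.t⁻¹ := by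
        intro j hj
        simp only [hf_def]
        rw [dif_neg hj]
      have hrel : ∀ r ∈ Brels (n + 1), FreeGroup.lift f r = 1 := by
        rintro r ⟨j, rfl⟩
        simp only [map_mul, map_inv, map_pow, FreeGroup.lift_apply_of]
        rw [mul_inv_eq_one]
        have hcastv : ((j.castSucc : Fin (n + 2)) : ℕ) = (j : ℕ) := rfl
        have hsuccv : ((j.succ : Fin (n + 2)) : ℕ) = (j : ℕ) + 1 := rfl
        have hcast := fpos j.castSucc (by omega)
        by_cases hj : (j : ℕ) < n
        · have hsucc := fpos j.succ (by omega)
          rw [hcast, hsucc]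
          have key := brels_holds (n := n) ⟨(j : ℕ), hj⟩
          have e1 : (⟨(j : ℕ), hj⟩ : Fin n).succ = ⟨((j.succ : Fin (n+2)) : ℕ), by omega⟩ := by
            apply Fin.ext; simp [hsuccv]
          have e2 : (⟨(j : ℕ), hj⟩ : Fin n).castSucc
              = ⟨((j.castSucc : Fin (n+2)) : ℕ), by omega⟩ := by
            apply Fin.ext; simp [hcastv]
          rw [e1, e2] at key
          rw [← map_inv, ← map_mul, ← map_mul, key, map_pow]
        · -- j is the top index: j = n, so j.succ is the stable letter
          have hjn : (j : ℕ) = n := by omega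
          have hsucc := fneg j.succ (by omega)
          have hlast : (⟨((j.castSucc : Fin (n+2)) : ℕ), by omega⟩ : Fin (n+1)) = Fin.last n := by
            apply Fin.ext; simp [hcastv, hjn]
          rw [hcast, hsucc, hlast]
          have key := HNNExtension.equiv_eq_conj (φ := φ) ⟨a, Subgroup.mem_zpowers a⟩
          have hφa : ((φ ⟨a, Subgroup.mem_zpowers a⟩ : Subgroup.zpowers (a ^ 2)) : G)
              = a ^ 2 := rfl
          rw [hφa] at key
          have key2 : HNNExtension.of (a ^ 2)
              = HNNExtension.t * HNNExtension.of a * HNNExtension.t⁻¹ := key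
          rw [inv_inv, ← ha_def, ← key2]
          exact (map_pow (HNNExtension.of (G := G) (A := Subgroup.zpowers a) (B := Subgroup.zpowers (a ^ 2)) (φ := φ)) a 2)
      set Ψ := PresentedGroup.toGroup hrel with hΨ
      intro hfin
      have h1 : IsOfFinOrder (Ψ (PresentedGroup.of i)) := Ψ.isOfFinOrder hfin
      rw [hΨ, PresentedGroup.toGroup.of, fpos i h] at h1
      refine ih ⟨i, h⟩ ?_
      have horder := orderOf_injective
        (HNNExtension.of (G := G) (A := Subgroup.zpowers a) (B := Subgroup.zpowers (a ^ 2))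
          (φ := φ)) (HNNExtension.of_injective (φ := φ)) (PresentedGroup.of ⟨i, h⟩)
      rw [← orderOf_pos_iff] at h1 ⊢
      rwa [horder] at h1
    · -- the top generator: map to ℤ
      have hi : i = Fin.last (n + 1) := by
        apply Fin.ext; have := i.isLt; simp only [Fin.val_last]; omega
      set f : Fin (n + 2) → Multiplicative ℤ := fun j =>
        if j = Fin.last (n + 1) then Multiplicative.ofAdd (1 : ℤ) else 1 with hf_def
      have hrel : ∀ r ∈ Brels (n + 1), FreeGroup.lift f r = 1 := by
        rintro r ⟨j, rfl⟩
        simp only [map_mul, map_inv, map_pow, FreeGroup.lift_apply_of]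
        have hcast : f j.castSucc = 1 := by
          have : j.castSucc ≠ Fin.last (n + 1) := ne_of_lt (Fin.castSucc_lt_last j)
          simp [hf_def, this]
        rw [hcast]
        group
      intro hfin
      have h1 := (PresentedGroup.toGroup hrel).isOfFinOrder hfin
      rw [PresentedGroup.toGroup.of] at h1
      rw [hi] at h1
      simp only [hf_def, if_pos rfl] at h1
      exact not_isOfFinOrder_ofAdd_one h1

theorem stmt_4 (n : ℕ) (hn : 1 ≤ n) (i : Fin (n + 1)) :
    ¬ IsOfFinOrder (PresentedGroup.of (rels := Brels n) i) :=
  main_lemma n i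
end

section
/- For every n ≥ 2, the subgroup of B(n) generated by the images of a₁ and a_{n+1} is a free group of rank two; equivalently, the homomorphism from the free group on two generators to B(n) sending the generators to a₁ and a_{n+1} is injective. -/
/-!
Write `B(n)` as an iterated HNN extension: the stable letter `a_{n+1}` conjugates `⟨a_n²⟩` onto
`⟨a_n⟩` in the base `B(n-1)`, which contains `a₁` with infinite order. For `n ≥ 2`, `a_n` is itself
the stable letter over a base containing `a₁`, so exponent sums in `a_n` show that `⟨a₁⟩` meets
`⟨a_n⟩` trivially. Hence in a reduced word in `a₁` and `a_{n+1}` every syllable `a₁^m`, `m ≠ 0`,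
lies outside both associated subgroups, and Britton's lemma forbids the word from being trivial.
It suffices to map `B(n)` into this tower of HNN extensions, built from `ℤ = ⟨a₁⟩`.
-/

open Subgroup HNNExtension Multiplicative

section ZPowers

variable {G : Type*} [Group G] {g : G}

theorem zpow_eq_one_iff_of_not_isOfFinOrder (hg : ¬IsOfFinOrder g) {m : ℤ} :
    g ^ m = 1 ↔ m = 0 :=
  ⟨fun h => injective_zpow_iff_not_isOfFinOrder.2 hg (h.trans (zpow_zero g).symm),
    fun h => h ▸ zpow_zero g⟩

noncomputable def zpowersEquivOfNotIsOfFinOrder (hg : ¬IsOfFinOrder g) :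
    Multiplicative ℤ ≃* zpowers g :=
  MonoidHom.ofInjective (f := zpowersHom G g) (injective_zpow_iff_not_isOfFinOrder.2 hg)

theorem coe_zpowersEquivOfNotIsOfFinOrder_apply (hg : ¬IsOfFinOrder g) (k : Multiplicative ℤ) :
    (zpowersEquivOfNotIsOfFinOrder hg k : G) = g ^ k.toAdd :=
  rfl

theorem zpowersEquivOfNotIsOfFinOrder_symm_self (hg : ¬IsOfFinOrder g) :
    (zpowersEquivOfNotIsOfFinOrder hg).symm ⟨g, mem_zpowers g⟩ = ofAdd 1 := by
  rw [MulEquiv.symm_apply_eq]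
  ext
  simp [coe_zpowersEquivOfNotIsOfFinOrder_apply]

/-- The isomorphism `g ^ (2 * k) ↦ g ^ k`. -/
noncomputable def zpowersSqEquiv (hg : ¬IsOfFinOrder g) : zpowers (g ^ 2) ≃* zpowers g :=
  (zpowersEquivOfNotIsOfFinOrder (by simpa [isOfFinOrder_pow] using hg)).symm.trans
    (zpowersEquivOfNotIsOfFinOrder hg)

theorem coe_zpowersSqEquiv_symm_self (hg : ¬IsOfFinOrder g) :
    ((zpowersSqEquiv hg).symm ⟨g, mem_zpowers g⟩ : G) = g ^ 2 := by
  simp [zpowersSqEquiv, zpowersEquivOfNotIsOfFinOrder_symm_self,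
    coe_zpowersEquivOfNotIsOfFinOrder_apply]

end ZPowers

namespace HNNExtension

variable {G : Type*} [Group G] {A B : Subgroup G} {φ : A ≃* B}

def tExponentSum : HNNExtension G A B φ →* Multiplicative ℤ :=
  lift 1 (ofAdd 1) fun _ => by simp

theorem not_isOfFinOrder_t : ¬IsOfFinOrder (t : HNNExtension G A B φ) := fun h => by
  simpa [tExponentSum, lift_t] using (tExponentSum.isOfFinOrder h).eq_one'

theorem disjoint_range_of_zpowers_t :
    Disjoint (of : G →* HNNExtension G A B φ).range (zpowers t) := by
  rw [disjoint_def]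
  rintro _ ⟨g, rfl⟩ ⟨j, hj⟩
  have hj0 : j = 0 := by simpa [tExponentSum, lift_t, lift_of] using congrArg tExponentSum hj
  simp_all

theorem inv_t_mul_of_mul_t {g : G} (hg : ¬IsOfFinOrder g) :
    (t : HNNExtension G (zpowers (g ^ 2)) (zpowers g) (zpowersSqEquiv hg))⁻¹ * of g * t =
      of g ^ 2 := by
  rw [← equiv_symm_eq_conj (b := ⟨g, mem_zpowers g⟩), coe_zpowersSqEquiv_symm_self, map_pow]

end HNNExtension

section Syllables

/-- `syllables l = (m₀, [(u₁, m₁), …, (uᵣ, mᵣ)])` reads the word `l` in the letters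
`true ↦ x`, `false ↦ t` as `x ^ m₀ * t ^ u₁ * x ^ m₁ * ⋯ * t ^ uᵣ * x ^ mᵣ`. -/
def syllables : List (Bool × Bool) → ℤ × List (ℤˣ × ℤ)
  | [] => (0, [])
  | (true, s) :: l => ((bif s then 1 else -1) + (syllables l).1, (syllables l).2)
  | (false, s) :: l => (0, (bif s then 1 else -1, (syllables l).1) :: (syllables l).2)

theorem syllables_fst_sign_pos {s : Bool} :
    ∀ {l : List (Bool × Bool)}, FreeGroup.IsReduced ((true, s) :: l) →
      0 < (bif s then 1 else -1) * (syllables ((true, s) :: l)).1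
  | [], _ => by cases s <;> simp [syllables]
  | (false, _) :: _, _ => by cases s <;> simp [syllables]
  | (true, s') :: l, h => by
    obtain ⟨hs, h⟩ := FreeGroup.isReduced_cons_cons.1 h
    obtain rfl : s = s' := hs rfl
    have := syllables_fst_sign_pos h
    cases s <;> simp only [syllables, cond_true, cond_false] at this ⊢ <;> omega

theorem syllables_fst_ne_zero {s : Bool} {l : List (Bool × Bool)}
    (h : FreeGroup.IsReduced ((true, s) :: l)) : (syllables ((true, s) :: l)).1 ≠ 0 :=
  fun h0 => (syllables_fst_sign_pos h).ne' (by rw [h0, mul_zero])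

theorem eq_nil_of_syllables_eq {l : List (Bool × Bool)} (hl : FreeGroup.IsReduced l)
    (h : syllables l = (0, [])) : l = [] := by
  match l, hl with
  | [], _ => rfl
  | (true, _) :: _, hl => exact absurd (congrArg Prod.fst h) (syllables_fst_ne_zero hl)
  | (false, _) :: _, _ => simp [syllables] at h

theorem isChain_syllables :
    ∀ {l : List (Bool × Bool)}, FreeGroup.IsReduced l →
      (syllables l).2.IsChain fun p q => p.2 = 0 → p.1 = q.1
  | [], _ => List.isChain_nil
  | (true, _) :: l, h => isChain_syllables (l := l) h.tail
  | (false, s) :: l, h => by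
    refine List.isChain_cons.2 ⟨?_, isChain_syllables h.tail⟩
    match l, h with
    | [], _ => simp [syllables]
    | (true, _) :: _, h =>
      exact fun _ _ h0 => absurd h0 (syllables_fst_ne_zero (FreeGroup.isReduced_cons_cons.1 h).2)
    | (false, s') :: _, h =>
      obtain rfl : s = s' := (FreeGroup.isReduced_cons_cons.1 h).1 rfl
      simp [syllables]

variable {G : Type*} [Group G] {A B : Subgroup G} {φ : A ≃* B}

theorem lift_mk_eq_syllables (F : G) (l : List (Bool × Bool)) :
    FreeGroup.lift (fun b : Bool => if b then (of F : HNNExtension G A B φ) else t)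
        (FreeGroup.mk l) =
      of (F ^ (syllables l).1) *
        ((syllables l).2.map fun p => t ^ (p.1 : ℤ) * of (F ^ p.2)).prod := by
  induction l with
  | nil => simp [syllables]
  | cons a l ih =>
    rw [FreeGroup.lift_mk] at ih ⊢
    rcases a with ⟨_ | _, _ | _⟩ <;> simp [syllables, ih, zpow_add, mul_assoc]

end Syllables

namespace HNNExtension

variable {G : Type*} [Group G] {A B : Subgroup G} {φ : A ≃* B}

/-- Britton's lemma applied to the syllable decomposition of a reduced word. -/
theorem injective_lift_of_t {F : G} (hF : ¬IsOfFinOrder F) (hA : Disjoint (zpowers F) A)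
    (hB : Disjoint (zpowers F) B) :
    Function.Injective
      (FreeGroup.lift fun b : Bool => if b then (of F : HNNExtension G A B φ) else t) := by
  have hF_toSubgroup : ∀ (u : ℤˣ) (m : ℤ), F ^ m ∈ toSubgroup A B u → m = 0 := fun u m hm => by
    have hdisj : Disjoint (zpowers F) (toSubgroup A B u) := by
      rcases Int.units_eq_one_or u with rfl | rfl
      exacts [hA, hB]
    rw [← zpow_eq_one_iff_of_not_isOfFinOrder hF]
    exact disjoint_def.1 hdisj (zpow_mem (mem_zpowers F) m) hm
  rw [injective_iff_map_eq_one]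
  intro w hw
  have hl : FreeGroup.IsReduced w.toWord := FreeGroup.isReduced_toWord
  have hprod := lift_mk_eq_syllables (φ := φ) F w.toWord
  rw [FreeGroup.mk_toWord, hw] at hprod
  let W : NormalWord.ReducedWord G A B :=
    { head := F ^ (syllables w.toWord).1
      toList := (syllables w.toWord).2.map fun p => (p.1, F ^ p.2)
      chain := (List.isChain_map _).2 <| (isChain_syllables hl).imp fun p _ h hm =>
        h (hF_toSubgroup p.1 p.2 hm) }
  have htail : (syllables w.toWord).2 = [] := by
    have := ReducedWord.toList_eq_nil_of_mem_of_range φ W ⟨1, by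
      simp only [W, NormalWord.ReducedWord.prod, List.map_map, map_one, hprod]
      rfl⟩
    simpa [W] using this
  have hhead : (syllables w.toWord).1 = 0 := by
    rw [htail, List.map_nil, List.prod_nil, mul_one, eq_comm, ← map_one of] at hprod
    exact (zpow_eq_one_iff_of_not_isOfFinOrder hF).1 (of_injective φ hprod)
  exact FreeGroup.toWord_eq_nil_iff.1 (eq_nil_of_syllables_eq hl (Prod.ext hhead htail))

end HNNExtension

structure MarkedGroup where
  carrier : Type
  [instGroup : Group carrier]
  mark : carrier
  not_isOfFinOrder_mark : ¬IsOfFinOrder mark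

attribute [instance] MarkedGroup.instGroup

namespace MarkedGroup

noncomputable abbrev succ (M : MarkedGroup) : MarkedGroup where
  carrier := HNNExtension M.carrier (zpowers (M.mark ^ 2)) (zpowers M.mark)
    (zpowersSqEquiv M.not_isOfFinOrder_mark)
  mark := t
  not_isOfFinOrder_mark := not_isOfFinOrder_t

theorem inv_mark_mul_of_mul_mark (M : MarkedGroup) :
    M.succ.mark⁻¹ * of M.mark * M.succ.mark = (of M.mark : M.succ.carrier) ^ 2 :=
  inv_t_mul_of_mul_t M.not_isOfFinOrder_mark

theorem not_isOfFinOrder_of (M : MarkedGroup) {x : M.carrier} (hx : ¬IsOfFinOrder x) :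
    ¬IsOfFinOrder (of x : M.succ.carrier) := by
  rwa [(of_injective _).isOfFinOrder_iff]

theorem injective_lift_of_of_mark (M : MarkedGroup) {x : M.carrier} (hx : ¬IsOfFinOrder x) :
    Function.Injective (FreeGroup.lift fun b : Bool =>
      if b then (of (of x : M.succ.carrier) : M.succ.succ.carrier) else M.succ.succ.mark) := by
  have hB : Disjoint (zpowers (of x : M.succ.carrier)) (zpowers M.succ.mark) :=
    disjoint_range_of_zpowers_t.mono_left (zpowers_le.2 (MonoidHom.mem_range.2 ⟨x, rfl⟩))
  exact injective_lift_of_t (M.not_isOfFinOrder_of hx)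
    (hB.mono_right (zpowers_le.2 (pow_mem (mem_zpowers _) 2))) hB

end MarkedGroup

/-- A model of `B(n)`: the iterated HNN extension of `ℤ = ⟨a₁⟩`, marked by `a_{n+1}`. -/
noncomputable abbrev tower : ℕ → MarkedGroup
  | 0 => ⟨Multiplicative ℤ, ofAdd 1, not_isOfFinOrder_of_isMulTorsionFree (by decide)⟩
  | n + 1 => (tower n).succ

/-- `towerGen n i` is the generator `a_{i+1}`. -/
noncomputable def towerGen : (n : ℕ) → Fin (n + 1) → (tower n).carrier
  | 0, _ => (tower 0).mark
  | n + 1, i => Fin.snoc (α := fun _ => (tower n).succ.carrier) (fun j => of (towerGen n j))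
      (tower n).succ.mark i

theorem towerGen_last (n : ℕ) : towerGen n (Fin.last n) = (tower n).mark := by
  cases n with
  | zero => rfl
  | succ n => exact Fin.snoc_last (α := fun _ => (tower n).succ.carrier) ..

theorem towerGen_castSucc (n : ℕ) (i : Fin (n + 1)) :
    towerGen (n + 1) i.castSucc = (of (towerGen n i) : (tower n).succ.carrier) :=
  Fin.snoc_castSucc (α := fun _ => (tower n).succ.carrier) ..

theorem towerGen_succ_zero (n : ℕ) :
    towerGen (n + 1) 0 = (of (towerGen n 0) : (tower n).succ.carrier) :=
  towerGen_castSucc n 0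

theorem towerGen_rel (n : ℕ) (i : Fin n) :
    (towerGen n i.succ)⁻¹ * towerGen n i.castSucc * towerGen n i.succ =
      towerGen n i.castSucc ^ 2 := by
  induction n with
  | zero => exact i.elim0
  | succ n ih =>
    induction i using Fin.lastCases with
    | last =>
      rw [Fin.succ_last, towerGen_last, towerGen_castSucc, towerGen_last]
      exact (tower n).inv_mark_mul_of_mul_mark
    | cast j =>
      rw [Fin.succ_castSucc, towerGen_castSucc, towerGen_castSucc, ← map_inv, ← map_mul,
        ← map_mul, ← map_pow, ih]

theorem not_isOfFinOrder_towerGen_zero (n : ℕ) : ¬IsOfFinOrder (towerGen n 0) := by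
  induction n with
  | zero => exact (tower 0).not_isOfFinOrder_mark
  | succ n ih =>
    rw [towerGen_succ_zero]
    exact (tower n).not_isOfFinOrder_of ih

theorem towerGen_rels_eq_one (n : ℕ) :
    ∀ r ∈ Brels n, FreeGroup.lift (towerGen n) r = 1 := by
  rintro _ ⟨i, rfl⟩
  simp [towerGen_rel]

/-- The homomorphism from the free group on two generators to `B(n)` sending the two
generators to `a₁` and `a_{n+1}` is injective, i.e. `⟨a₁, a_{n+1}⟩ ≤ B(n)` is free of
rank two. -/
theorem stmt_6 (n : ℕ) (hn : 2 ≤ n) :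
    Function.Injective (FreeGroup.lift (fun b : Bool =>
      if b then PresentedGroup.of (rels := Brels n) 0
      else PresentedGroup.of (rels := Brels n) (Fin.last n))) := by
  obtain ⟨k, rfl⟩ := Nat.exists_eq_add_of_le' hn
  refine Function.Injective.of_comp (f := PresentedGroup.toGroup (towerGen_rels_eq_one (k + 2))) ?_
  rw [← MonoidHom.coe_comp]
  convert (tower k).injective_lift_of_of_mark (not_isOfFinOrder_towerGen_zero k) using 2
  refine FreeGroup.ext_hom _ _ ?_
  rintro (_ | _)
  · simp [towerGen_last]
  · simp [towerGen_succ_zero]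
end

section
/- For every n ≥ 1, the cyclic subgroups of B(n) generated by the images of a₁ and of a_{n+1} have trivial intersection. -/
/-- The map sending the last generator to `1 : ℤ` and the others to `0`. -/
def Bf (n : ℕ) : Fin (n + 1) → Multiplicative ℤ :=
  fun i => if i = Fin.last n then Multiplicative.ofAdd 1 else 1

lemma Bf_rels (n : ℕ) : ∀ r ∈ Brels n, FreeGroup.lift (Bf n) r = 1 := by
  rintro r ⟨i, rfl⟩
  have hcast : Bf n i.castSucc = 1 := by
    refine if_neg (fun h => ?_)
    have := congrArg Fin.val h
    simp [Fin.val_last] at this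
    omega
  simp [hcast]

theorem stmt_7 (n : ℕ) (hn : 1 ≤ n) :
    Subgroup.zpowers (PresentedGroup.of (rels := Brels n) 0) ⊓
      Subgroup.zpowers (PresentedGroup.of (rels := Brels n) (Fin.last n)) = ⊥ := by
  set φ := PresentedGroup.toGroup (Bf_rels n) with hφ
  rw [Subgroup.eq_bot_iff_forall]
  rintro x ⟨⟨k, hk⟩, ⟨m, hm⟩⟩
  have h0 : φ (PresentedGroup.of (rels := Brels n) 0) = 1 := by
    rw [hφ, PresentedGroup.toGroup.of]
    show (if (0 : Fin (n+1)) = Fin.last n then Multiplicative.ofAdd 1 else 1) = 1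
    refine if_neg (fun h => ?_)
    have := congrArg Fin.val h
    simp [Fin.val_last] at this
    omega
  have hlast : φ (PresentedGroup.of (rels := Brels n) (Fin.last n)) = Multiplicative.ofAdd 1 := by
    rw [hφ, PresentedGroup.toGroup.of]
    simp [Bf]
  have h1 : φ x = 1 := by rw [← hk, map_zpow, h0, one_zpow]
  have h2 : φ x = Multiplicative.ofAdd m := by
    rw [← hm, map_zpow, hlast, ← ofAdd_zsmul]
    simp
  have hm0 : m = 0 := by
    rw [h1] at h2
    have := congrArg Multiplicative.toAdd h2
    simpa using this.symm
  rw [← hm, hm0]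
  exact zpow_zero _
end

section
/- For n ∈ {1, 2, 3}, the group H(n) is trivial. -/
/-- The relators of Higman's presentation `ℋ(n)` with generators indexed by `ℤ/n`:
for each `i ∈ ℤ/n`, the word `a_{i+1}⁻¹ a_i a_{i+1} a_i⁻²`. -/
def Hrels (n : ℕ) : Set (FreeGroup (ZMod n)) :=
  {r | ∃ i : ZMod n, r =
    (FreeGroup.of (i + 1))⁻¹ * FreeGroup.of i * FreeGroup.of (i + 1) *
      (FreeGroup.of i ^ 2)⁻¹}

section AbstractHigman

variable {G : Type*} [Group G]

/-- If `y⁻¹ x y = x²` then `y⁻¹ xᵏ y = x^(2k)` for all integers `k`. -/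
private lemma sq_conj {x y : G} (h : y⁻¹ * x * y = x ^ (2 : ℕ)) (k : ℤ) :
    y⁻¹ * x ^ k * y = x ^ (2 * k) := by
  have h' : y⁻¹ * x * (y⁻¹)⁻¹ = x ^ (2 : ℤ) := by rw [inv_inv, h]; group
  calc y⁻¹ * x ^ k * y = y⁻¹ * x ^ k * (y⁻¹)⁻¹ := by rw [inv_inv]
    _ = (y⁻¹ * x * (y⁻¹)⁻¹) ^ k := conj_zpow.symm
    _ = (x ^ (2 : ℤ)) ^ k := by rw [h']
    _ = x ^ (2 * k) := by rw [← zpow_mul]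

private lemma movL {x y : G} (h : y⁻¹ * x * y = x ^ (2 : ℕ)) (k : ℤ) :
    y⁻¹ * x ^ k = x ^ (2 * k) * y⁻¹ := by
  calc y⁻¹ * x ^ k = (y⁻¹ * x ^ k * y) * y⁻¹ := by group
    _ = x ^ (2 * k) * y⁻¹ := by rw [sq_conj h k]

private lemma movR {x y : G} (h : y⁻¹ * x * y = x ^ (2 : ℕ)) (k : ℤ) :
    x ^ k * y = y * x ^ (2 * k) := by
  calc x ^ k * y = y * (y⁻¹ * x ^ k * y) := by group
    _ = y * x ^ (2 * k) := by rw [sq_conj h k]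

private lemma higman1 (a : G) (h : a⁻¹ * a * a = a ^ (2 : ℕ)) : a = 1 := by
  have h2 : a = a * a := by
    calc a = a⁻¹ * a * a := by group
      _ = a ^ (2 : ℕ) := h
      _ = a * a := pow_two a
  exact (left_eq_mul.mp h2)

private lemma higman2 (a b : G)
    (h1 : b⁻¹ * a * b = a ^ (2 : ℕ)) (h2 : a⁻¹ * b * a = b ^ (2 : ℕ)) :
    a = 1 ∧ b = 1 := by
  have p : a * b = b * (a * a) := by
    calc a * b = b * (b⁻¹ * a * b) := by group
      _ = b * a ^ (2 : ℕ) := by rw [h1]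
      _ = b * (a * a) := by rw [pow_two]
  have q : b * a = a * (b * b) := by
    calc b * a = a * (a⁻¹ * b * a) := by group
      _ = a * b ^ (2 : ℕ) := by rw [h2]
      _ = a * (b * b) := by rw [pow_two]
  have e : a * b = a * (b * b) * a := by
    calc a * b = (b * a) * a := by rw [p]; group
      _ = a * (b * b) * a := by rw [q]
  have hba : b * a = 1 := by
    calc b * a = (a * b)⁻¹ * (a * (b * b) * a) := by group
      _ = (a * b)⁻¹ * (a * b) := by rw [← e]
      _ = 1 := by group
  have hb : b = a⁻¹ := eq_inv_of_mul_eq_one_left hba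
  have haa : a = a * a := by
    calc a = b⁻¹ * a * b := by rw [hb]; group
      _ = a ^ (2 : ℕ) := h1
      _ = a * a := pow_two a
  have ha : a = 1 := left_eq_mul.mp haa
  refine ⟨ha, ?_⟩
  rw [hb, ha, inv_one]

private lemma higman3 (a b c : G)
    (h1 : b⁻¹ * a * b = a ^ (2 : ℕ)) (h2 : c⁻¹ * b * c = b ^ (2 : ℕ))
    (h3 : a⁻¹ * c * a = c ^ (2 : ℕ)) :
    a = 1 ∧ b = 1 ∧ c = 1 := by
  have h3' : a⁻¹ * c * a = c ^ (2 : ℤ) := by rw [h3]; group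
  -- A : a b a⁻¹ = b a
  have A : a * b * a⁻¹ = b * a := by
    calc a * b * a⁻¹ = (a ^ (1 : ℤ) * b) * a⁻¹ := by group
      _ = (b * a ^ (2 * 1 : ℤ)) * a⁻¹ := by rw [movR h1 1]
      _ = b * a := by group
  -- B0 : (c²)⁻¹ b c² = b⁴
  have B0 : (c ^ (2 : ℤ))⁻¹ * b * c ^ (2 : ℤ) = b ^ (4 : ℤ) := by
    calc (c ^ (2 : ℤ))⁻¹ * b * c ^ (2 : ℤ)
        = c⁻¹ * (c⁻¹ * b ^ (1 : ℤ) * c) * c := by rw [zpow_two]; group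
      _ = c⁻¹ * b ^ (2 * 1 : ℤ) * c := by rw [sq_conj h2 1]
      _ = c⁻¹ * b ^ (2 : ℤ) * c := by norm_num
      _ = b ^ (2 * 2 : ℤ) := by rw [sq_conj h2 2]
      _ = b ^ (4 : ℤ) := by norm_num
  have B1 : (a⁻¹ * c * a)⁻¹ * b * (a⁻¹ * c * a) = b ^ (4 : ℤ) := by
    have hB := B0; rw [← h3'] at hB; exact hB
  have B : c⁻¹ * (b * a) * c = (b * a) ^ (4 : ℤ) := by
    calc c⁻¹ * (b * a) * c = c⁻¹ * (a * b * a⁻¹) * c := by rw [A]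
      _ = a * ((a⁻¹ * c * a)⁻¹ * b * (a⁻¹ * c * a)) * a⁻¹ := by group
      _ = a * b ^ (4 : ℤ) * a⁻¹ := by rw [B1]
      _ = (a * b * a⁻¹) ^ (4 : ℤ) := conj_zpow.symm
      _ = (b * a) ^ (4 : ℤ) := by rw [A]
  -- C : (b a)⁴ = b⁴ a¹⁵
  have D2 : (b * a) * (b * a) = (b * b) * a ^ (3 : ℤ) := by
    calc (b * a) * (b * a) = b * (a ^ (1 : ℤ) * b) * a := by group
      _ = b * (b * a ^ (2 * 1 : ℤ)) * a := by rw [movR h1 1]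
      _ = (b * b) * a ^ (3 : ℤ) := by group
  have C : (b * a) ^ (4 : ℤ) = b ^ (4 : ℤ) * a ^ (15 : ℤ) := by
    calc (b * a) ^ (4 : ℤ) = ((b * a) * (b * a)) * ((b * a) * (b * a)) := by
          rw [show (4 : ℤ) = 2 * 2 by norm_num, zpow_mul, zpow_two, zpow_two]
      _ = ((b * b) * a ^ (3 : ℤ)) * ((b * b) * a ^ (3 : ℤ)) := by rw [D2]
      _ = (b * b) * (a ^ (3 : ℤ) * b) * (b * a ^ (3 : ℤ)) := by group
      _ = (b * b) * (b * a ^ (2 * 3 : ℤ)) * (b * a ^ (3 : ℤ)) := by rw [movR h1 3]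
      _ = (b * b * b) * (a ^ (6 : ℤ) * b) * a ^ (3 : ℤ) := by group
      _ = (b * b * b) * (b * a ^ (2 * 6 : ℤ)) * a ^ (3 : ℤ) := by rw [movR h1 6]
      _ = ((b * b) * (b * b)) * a ^ (15 : ℤ) := by group
      _ = b ^ (4 : ℤ) * a ^ (15 : ℤ) := by
          rw [show (4 : ℤ) = 2 * 2 by norm_num, zpow_mul, zpow_two, zpow_two]
  -- E : c⁻¹ a c = b⁻² (b a)⁴
  have E : c⁻¹ * a * c = b ^ (2 * (-1) : ℤ) * (b * a) ^ (4 : ℤ) := by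
    calc c⁻¹ * a * c = (c⁻¹ * b ^ (-1 : ℤ) * c) * (c⁻¹ * (b * a) * c) := by group
      _ = b ^ (2 * (-1) : ℤ) * (b * a) ^ (4 : ℤ) := by rw [sq_conj h2 (-1), B]
  -- F : c⁻¹ a c = a c⁻¹
  have F : c⁻¹ * a * c = a * c⁻¹ := by
    calc c⁻¹ * a * c = c⁻¹ * a * (c ^ (2 : ℤ)) * c⁻¹ := by group
      _ = c⁻¹ * a * (a⁻¹ * c * a) * c⁻¹ := by rw [h3']
      _ = a * c⁻¹ := by group
  -- G : a c⁻¹ = b² a¹⁵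
  have Gq : a * c⁻¹ = b ^ (2 : ℤ) * a ^ (15 : ℤ) := by
    calc a * c⁻¹ = c⁻¹ * a * c := F.symm
      _ = b ^ (2 * (-1) : ℤ) * (b * a) ^ (4 : ℤ) := E
      _ = b ^ (2 * (-1) : ℤ) * (b ^ (4 : ℤ) * a ^ (15 : ℤ)) := by rw [C]
      _ = b ^ (2 : ℤ) * a ^ (15 : ℤ) := by group
  -- Hc : c = a⁻¹¹ b⁻²
  have Hc : c = a ^ (-11 : ℤ) * b ^ (-2 : ℤ) := by
    calc c = (a⁻¹ * (a * c⁻¹))⁻¹ := by group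
      _ = (a⁻¹ * (b ^ (2 : ℤ) * a ^ (15 : ℤ)))⁻¹ := by rw [Gq]
      _ = a ^ (-15 : ℤ) * (b⁻¹ * (b⁻¹ * a ^ (1 : ℤ))) := by group
      _ = a ^ (-15 : ℤ) * (b⁻¹ * (a ^ (2 * 1 : ℤ) * b⁻¹)) := by rw [movL h1 1]
      _ = a ^ (-15 : ℤ) * (b⁻¹ * a ^ (2 : ℤ)) * b⁻¹ := by group
      _ = a ^ (-15 : ℤ) * (a ^ (2 * 2 : ℤ) * b⁻¹) * b⁻¹ := by rw [movL h1 2]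
      _ = a ^ (-11 : ℤ) * b ^ (-2 : ℤ) := by group
  -- Z1 : a⁻¹ c a = a⁻⁸ b⁻²
  have Z1 : a⁻¹ * c * a = a ^ (-8 : ℤ) * b ^ (-2 : ℤ) := by
    calc a⁻¹ * c * a = a⁻¹ * (a ^ (-11 : ℤ) * b ^ (-2 : ℤ)) * a := by rw [Hc]
      _ = a ^ (-12 : ℤ) * (b⁻¹ * (b⁻¹ * a ^ (1 : ℤ))) := by group
      _ = a ^ (-12 : ℤ) * (b⁻¹ * (a ^ (2 * 1 : ℤ) * b⁻¹)) := by rw [movL h1 1]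
      _ = a ^ (-12 : ℤ) * (b⁻¹ * a ^ (2 : ℤ)) * b⁻¹ := by group
      _ = a ^ (-12 : ℤ) * (a ^ (2 * 2 : ℤ) * b⁻¹) * b⁻¹ := by rw [movL h1 2]
      _ = a ^ (-8 : ℤ) * b ^ (-2 : ℤ) := by group
  -- Z2 : c² = a⁻⁵⁵ b⁻⁴
  have Z2 : c ^ (2 : ℤ) = a ^ (-55 : ℤ) * b ^ (-4 : ℤ) := by
    calc c ^ (2 : ℤ) = c * c := zpow_two c
      _ = (a ^ (-11 : ℤ) * b ^ (-2 : ℤ)) * (a ^ (-11 : ℤ) * b ^ (-2 : ℤ)) := by rw [Hc]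
      _ = a ^ (-11 : ℤ) * (b⁻¹ * (b⁻¹ * a ^ (-11 : ℤ))) * b ^ (-2 : ℤ) := by group
      _ = a ^ (-11 : ℤ) * (b⁻¹ * (a ^ (2 * (-11) : ℤ) * b⁻¹)) * b ^ (-2 : ℤ) := by
          rw [movL h1 (-11)]
      _ = a ^ (-11 : ℤ) * (b⁻¹ * a ^ (-22 : ℤ)) * (b⁻¹ * b ^ (-2 : ℤ)) := by group
      _ = a ^ (-11 : ℤ) * (a ^ (2 * (-22) : ℤ) * b⁻¹) * (b⁻¹ * b ^ (-2 : ℤ)) := by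
          rw [movL h1 (-22)]
      _ = a ^ (-55 : ℤ) * b ^ (-4 : ℤ) := by group
  have K : a ^ (-8 : ℤ) * b ^ (-2 : ℤ) = a ^ (-55 : ℤ) * b ^ (-4 : ℤ) := by
    rw [← Z1, ← Z2]; exact h3'
  have P : b ^ (-2 : ℤ) = a ^ (47 : ℤ) := by
    calc b ^ (-2 : ℤ)
        = a ^ (55 : ℤ) * (a ^ (-55 : ℤ) * b ^ (-4 : ℤ)) * b ^ (2 : ℤ) := by group
      _ = a ^ (55 : ℤ) * (a ^ (-8 : ℤ) * b ^ (-2 : ℤ)) * b ^ (2 : ℤ) := by rw [← K]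
      _ = a ^ (47 : ℤ) := by group
  have bb : b * b = a ^ (-47 : ℤ) := by
    calc b * b = (b ^ (-2 : ℤ))⁻¹ := by rw [zpow_neg, inv_inv, zpow_two]
      _ = (a ^ (47 : ℤ))⁻¹ := by rw [P]
      _ = a ^ (-47 : ℤ) := by group
  have W : a ^ (1 : ℤ) * (b * b) = b * b * a ^ (4 : ℤ) := by
    calc a ^ (1 : ℤ) * (b * b) = (a ^ (1 : ℤ) * b) * b := by group
      _ = (b * a ^ (2 * 1 : ℤ)) * b := by rw [movR h1 1]
      _ = b * (a ^ (2 : ℤ) * b) := by group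
      _ = b * (b * a ^ (2 * 2 : ℤ)) := by rw [movR h1 2]
      _ = b * b * a ^ (4 : ℤ) := by group
  rw [bb] at W
  -- W : a¹ a⁻⁴⁷ = a⁻⁴⁷ a⁴
  have Q : a ^ (3 : ℤ) = 1 := by
    calc a ^ (3 : ℤ)
        = (a ^ (1 : ℤ) * a ^ (-47 : ℤ))⁻¹ * (a ^ (-47 : ℤ) * a ^ (4 : ℤ)) := by group
      _ = (a ^ (1 : ℤ) * a ^ (-47 : ℤ))⁻¹ * (a ^ (1 : ℤ) * a ^ (-47 : ℤ)) := by rw [← W]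
      _ = 1 := by group
  have ba2 : b * b = a := by
    calc b * b = a ^ (-47 : ℤ) := bb
      _ = (a ^ (3 : ℤ)) ^ (-16 : ℤ) * a := by group
      _ = (1 : G) ^ (-16 : ℤ) * a := by rw [Q]
      _ = a := by group
  have hbb : b⁻¹ * (b * b) * b = (b * b) ^ (2 : ℕ) := by rw [ba2]; exact h1
  have bsq : b * b = 1 := by
    have hx : b * b = (b * b) * (b * b) := by
      calc b * b = b⁻¹ * (b * b) * b := by
            rw [inv_mul_cancel_left]
        _ = (b * b) ^ (2 : ℕ) := hbb
        _ = (b * b) * (b * b) := pow_two _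
    exact left_eq_mul.mp hx
  have ha : a = 1 := ba2.symm.trans bsq
  have hb : b = 1 := by
    calc b = c * (c⁻¹ * b * c) * c⁻¹ := by group
      _ = c * b ^ (2 : ℕ) * c⁻¹ := by rw [h2]
      _ = c * (b * b) * c⁻¹ := by rw [pow_two]
      _ = c * 1 * c⁻¹ := by rw [bsq]
      _ = 1 := by group
  have hc : c = 1 := by
    have h3a := h3
    rw [ha] at h3a
    -- h3a : 1⁻¹ * c * 1 = c ^ 2
    have hcc : c = c * c := by
      calc c = 1⁻¹ * c * 1 := by group
        _ = c ^ (2 : ℕ) := h3a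
        _ = c * c := pow_two c
    exact left_eq_mul.mp hcc
  exact ⟨ha, hb, hc⟩

end AbstractHigman

private lemma Hrels_rel {n : ℕ} (i : ZMod n) :
    (PresentedGroup.of (i + 1) : PresentedGroup (Hrels n))⁻¹ * PresentedGroup.of i *
      PresentedGroup.of (i + 1) = (PresentedGroup.of i) ^ (2 : ℕ) := by
  have hmem : ((FreeGroup.of (i + 1))⁻¹ * FreeGroup.of i * FreeGroup.of (i + 1) *
      (FreeGroup.of i ^ 2)⁻¹ : FreeGroup (ZMod n)) ∈ Subgroup.normalClosure (Hrels n) :=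
    Subgroup.subset_normalClosure ⟨i, rfl⟩
  have h1 : (PresentedGroup.mk (Hrels n)) ((FreeGroup.of (i + 1))⁻¹ * FreeGroup.of i *
      FreeGroup.of (i + 1) * (FreeGroup.of i ^ 2)⁻¹) = 1 :=
    (QuotientGroup.eq_one_iff _).mpr hmem
  rw [map_mul, map_mul, map_mul, map_inv, map_inv, map_pow] at h1
  have h2 : ((PresentedGroup.of (i + 1) : PresentedGroup (Hrels n)))⁻¹ * PresentedGroup.of i *
      PresentedGroup.of (i + 1) * ((PresentedGroup.of i) ^ (2 : ℕ))⁻¹ = 1 := h1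
  calc (PresentedGroup.of (i + 1) : PresentedGroup (Hrels n))⁻¹ * PresentedGroup.of i *
        PresentedGroup.of (i + 1)
      = ((PresentedGroup.of (i + 1) : PresentedGroup (Hrels n)))⁻¹ * PresentedGroup.of i *
        PresentedGroup.of (i + 1) * ((PresentedGroup.of i) ^ (2 : ℕ))⁻¹ *
        ((PresentedGroup.of i) ^ (2 : ℕ)) := by group
    _ = 1 * ((PresentedGroup.of i) ^ (2 : ℕ)) := by rw [h2]
    _ = (PresentedGroup.of i) ^ (2 : ℕ) := one_mul _

theorem stmt_8 (n : ℕ) (hn : n = 1 ∨ n = 2 ∨ n = 3)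
    (g : PresentedGroup (Hrels n)) : g = 1 := by
  have key : ∀ i : ZMod n, (PresentedGroup.of i : PresentedGroup (Hrels n)) = 1 := by
    rcases hn with rfl | rfl | rfl
    · intro i
      have h := Hrels_rel (n := 1) i
      have hi : i + 1 = i := by
        have : (1 : ZMod 1) = 0 := rfl
        rw [this, add_zero]
      rw [hi] at h
      exact higman1 _ h
    · intro i
      have h0 := Hrels_rel (n := 2) 0
      have h1 := Hrels_rel (n := 2) 1
      have e0 : ((0 : ZMod 2) + 1) = 1 := by decide
      have e1 : ((1 : ZMod 2) + 1) = 0 := by decide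
      rw [e0] at h0
      rw [e1] at h1
      obtain ⟨ha, hb⟩ := higman2 _ _ h0 h1
      fin_cases i
      · exact ha
      · exact hb
    · intro i
      have h0 := Hrels_rel (n := 3) 0
      have h1 := Hrels_rel (n := 3) 1
      have h2 := Hrels_rel (n := 3) 2
      have e0 : ((0 : ZMod 3) + 1) = 1 := by decide
      have e1 : ((1 : ZMod 3) + 1) = 2 := by decide
      have e2 : ((2 : ZMod 3) + 1) = 0 := by decide
      rw [e0] at h0
      rw [e1] at h1
      rw [e2] at h2
      obtain ⟨ha, hb, hc⟩ := higman3 _ _ _ h0 h1 h2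
      fin_cases i
      · exact ha
      · exact hb
      · exact hc
  have : g ∈ (⊥ : Subgroup (PresentedGroup (Hrels n))) := by
    refine PresentedGroup.generated_by _ _ (fun j => ?_) g
    rw [Subgroup.mem_bot]
    exact key j
  rwa [Subgroup.mem_bot] at this
end

section
/- Let f : ℕ+ → ℕ+ be the successor function f(i) = i + 1. Then for every i ∈ ℕ+, the image of the generator a_i in the group 𝒫(f) has infinite order; in particular 𝒫(f) is nontrivial. -/
universe u

open Function HNNExtension

section Conjugation

variable {G : Type u} [Group G] {g g' : G}

theorem injective_zpowersHom_of_not_isOfFinOrder (hg : ¬IsOfFinOrder g) :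
    Injective (zpowersHom G g) :=
  injective_zpow_iff_not_isOfFinOrder.mpr hg

noncomputable def zpowersHomRangeEquiv (hg : ¬IsOfFinOrder g) (hg' : ¬IsOfFinOrder g') :
    (zpowersHom G g).range ≃* (zpowersHom G g').range :=
  (MonoidHom.ofInjective (injective_zpowersHom_of_not_isOfFinOrder hg)).symm.trans
    (MonoidHom.ofInjective (injective_zpowersHom_of_not_isOfFinOrder hg'))

theorem exists_conj_eq_of_not_isOfFinOrder (hg : ¬IsOfFinOrder g) (hg' : ¬IsOfFinOrder g') :
    ∃ (H : Type u) (_ : Group H) (ι : G →* H) (t : H), Injective ι ∧ t * ι g * t⁻¹ = ι g' := by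
  let φ := zpowersHomRangeEquiv hg hg'
  let a := MonoidHom.ofInjective (injective_zpowersHom_of_not_isOfFinOrder hg) (.ofAdd 1)
  have ha : (a : G) = g := by simp [a, MonoidHom.ofInjective_apply]
  have hφa : (φ a : G) = g' := by
    simp only [φ, a, zpowersHomRangeEquiv, MulEquiv.trans_apply, MulEquiv.symm_apply_apply]
    simp [MonoidHom.ofInjective_apply]
  have hconj := equiv_eq_conj (φ := φ) a
  rw [ha, hφa] at hconj
  exact ⟨HNNExtension G _ _ φ, inferInstance, of, t, of_injective φ, hconj.symm⟩

end Conjugation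

theorem lift_conj_pow_eq_one_of_mem_Prels_succ {H : Type*} [Group H] {t h : H}
    (hrel : (t * h * t⁻¹)⁻¹ * h * (t * h * t⁻¹) = h ^ 2) :
    ∀ r ∈ Prels (fun i : ℕ+ => i + 1),
      FreeGroup.lift (fun i : ℕ+ => MulAut.conj (t ^ (i : ℕ)) h) r = 1 := by
  rintro r ⟨i, rfl⟩
  have hsucc : MulAut.conj (t ^ ((i + 1 : ℕ+) : ℕ)) h =
      MulAut.conj (t ^ (i : ℕ)) (t * h * t⁻¹) := by
    rw [PNat.add_coe, PNat.one_coe, pow_succ, map_mul, MulAut.mul_apply, MulAut.conj_apply t]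
  rw [map_mul, map_mul, map_mul, map_inv, map_inv, map_pow (FreeGroup.lift _),
    FreeGroup.lift_apply_of, FreeGroup.lift_apply_of, hsucc, ← map_pow, ← map_inv, ← map_inv,
    ← map_mul, ← map_mul, ← map_mul, hrel, mul_inv_cancel, map_one]

theorem not_isOfFinOrder_addRight_one {α : Type*} [AddGroupWithOne α] [CharZero α] :
    ¬IsOfFinOrder (Equiv.addRight (1 : α)) := by
  rw [isOfFinOrder_iff_pow_eq_one]
  rintro ⟨n, hn, hpow⟩
  have hcast : (n : α) = 0 := by simpa using congrArg (· 0) hpow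
  exact hn.ne' (Nat.cast_eq_zero.mp hcast)

theorem mulRight₀_pow_apply {G₀ : Type*} [GroupWithZero G₀] {a : G₀} (ha : a ≠ 0) (n : ℕ)
    (x : G₀) : (Equiv.mulRight₀ a ha ^ n) x = x * a ^ n := by
  induction n with
  | zero => simp
  | succ n ih => rw [pow_succ', Equiv.Perm.mul_apply, ih, pow_succ, ← mul_assoc]; rfl

theorem not_isOfFinOrder_mulRight₀ {G₀ : Type*} [GroupWithZero G₀] {a : G₀} (ha : a ≠ 0)
    (h : ¬IsOfFinOrder a) : ¬IsOfFinOrder (Equiv.mulRight₀ a ha) := by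
  rw [isOfFinOrder_iff_pow_eq_one] at h ⊢
  rintro ⟨n, hn, hpow⟩
  refine h ⟨n, hn, ?_⟩
  simpa [mulRight₀_pow_apply] using congrArg (· 1) hpow

theorem mulRight₀_inv_mul_addRight_mul_mulRight₀ {K : Type*} [DivisionRing K] {a : K}
    (ha : a ≠ 0) (b : K) :
    (Equiv.mulRight₀ a ha)⁻¹ * Equiv.addRight b * Equiv.mulRight₀ a ha =
      Equiv.addRight (b * a⁻¹) := by
  ext x
  simp [Equiv.Perm.mul_apply, Equiv.Perm.inv_def, add_mul, mul_assoc, ha]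

theorem not_isOfFinOrder_two_inv : ¬IsOfFinOrder (2⁻¹ : ℚ) := by
  rw [isOfFinOrder_iff_pow_eq_one]
  rintro ⟨n, hn, hpow⟩
  rw [pow_eq_one_iff_of_nonneg (by norm_num) hn.ne'] at hpow
  norm_num at hpow

theorem stmt_10 :
    (∀ i : ℕ+, ¬ IsOfFinOrder
      (PresentedGroup.of (rels := Prels (fun i : ℕ+ => i + 1)) i)) ∧
      Nontrivial (PresentedGroup (Prels (fun i : ℕ+ => i + 1))) := by
  set shift := Equiv.addRight (1 : ℚ)
  set halve := Equiv.mulRight₀ (2⁻¹ : ℚ) (by norm_num)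
  have hrel : halve⁻¹ * shift * halve = shift ^ 2 := by
    rw [mulRight₀_inv_mul_addRight_mul_mulRight₀]
    norm_num [shift]
  obtain ⟨H, _, ι, t, hι, ht⟩ := exists_conj_eq_of_not_isOfFinOrder
    not_isOfFinOrder_addRight_one (not_isOfFinOrder_mulRight₀ _ not_isOfFinOrder_two_inv)
  have hrelH : (t * ι shift * t⁻¹)⁻¹ * ι shift * (t * ι shift * t⁻¹) = ι shift ^ 2 := by
    rw [ht, ← map_inv, ← map_mul, ← map_mul, ← map_pow, hrel]
  have hgen (i : ℕ+) :
      ¬IsOfFinOrder (PresentedGroup.of (rels := Prels (fun i : ℕ+ => i + 1)) i) := by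
    intro hfin
    have hconj : IsConj (ι shift) (MulAut.conj (t ^ (i : ℕ)) (ι shift)) :=
      isConj_iff.mpr ⟨t ^ (i : ℕ), (MulAut.conj_apply _ _).symm⟩
    have himage := (PresentedGroup.toGroup
      (lift_conj_pow_eq_one_of_mem_Prels_succ hrelH)).isOfFinOrder hfin
    rw [PresentedGroup.toGroup.of] at himage
    exact not_isOfFinOrder_addRight_one (hι.isOfFinOrder_iff.mp (hconj.symm.isOfFinOrder himage))
  exact ⟨hgen, nontrivial_of_ne (PresentedGroup.of 1) 1 fun h => hgen 1 (by rw [h]; exact .one)⟩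
end

section
/- For every function f : ℕ+ → ℕ+, the abelianization of the group 𝒫(f) is trivial; that is, 𝒫(f) is a perfect group. -/
theorem eq_one_of_inv_mul_mul_eq_sq {A : Type*} [CommGroup A] {a b : A}
    (h : b⁻¹ * a * b = a ^ 2) : a = 1 := by
  rwa [mul_comm b⁻¹, inv_mul_cancel_right, pow_two, left_eq_mul] at h

namespace Prels

variable {A : Type*} [CommGroup A] (f : ℕ+ → ℕ+)

theorem map_of_eq_one (φ : PresentedGroup (Prels f) →* A) (i : ℕ+) :
    φ (PresentedGroup.of i) = 1 := by
  have hrel := congrArg φ (PresentedGroup.one_of_mem (rels := Prels f) ⟨i, rfl⟩)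
  simp only [map_mul, map_inv, map_pow, map_one] at hrel
  exact eq_one_of_inv_mul_mul_eq_sq (mul_inv_eq_one.mp hrel)

theorem hom_eq_one (φ : PresentedGroup (Prels f) →* A) : φ = 1 :=
  PresentedGroup.ext fun i => map_of_eq_one f φ i

end Prels

/-- The abelianization of `𝒫(f)` is trivial, i.e. `𝒫(f)` is perfect. -/
theorem stmt_11 (f : ℕ+ → ℕ+)
    (x : Abelianization (PresentedGroup (Prels f))) : x = 1 := by
  have hid : MonoidHom.id _ = (1 : Abelianization (PresentedGroup (Prels f)) →* _) :=
    Abelianization.hom_ext _ _ (Prels.hom_eq_one f _)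
  exact DFunLike.congr_fun hid x
end
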